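/- Let H : Matrix (Fin d) (Fin d) ℂ be Hermitian, ε ∈ ℝ, and ρ : Matrix (Fin d) (Fin d) ℂ. Then for every k ∈ {0, …, N−1}, the partial trace of G onto slice k — the d × d matrix whose (i, j) entry is the sum over all assignments h of values in Fin d to the slices other than k of G evaluated at the pair of index functions extending h by i (respectively j) at slice k — equals Matrix.exp(−(i·ε·k) • H) * ρ * Matrix.exp((i·ε·k) • H), the Schrödinger-evolved state at time εk. In particular for k = 0 it equals ρ, and the full trace satisfies Tr G = tr ρ. (Thus tracing the generalized spacetime state over all time slices except one recovers the ordinary quantum state at that time, unitarily evolved by H.) -/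

import Mathlib

open Matrix Complex NormedSpace

/-- The slice-wise Kronecker product `⊗_t A t`. -/
noncomputable def sliceProd (N d : ℕ) [NeZero N]
    (A : ZMod N → Matrix (Fin d) (Fin d) ℂ) :
    Matrix (ZMod N → Fin d) (ZMod N → Fin d) ℂ :=
  Matrix.of fun f g => ∏ t : ZMod N, A t (f t) (g t)

/-- The cyclic time-translation operator `𝒮`. -/
noncomputable def timeShift (N d : ℕ) [NeZero N] :
    Matrix (ZMod N → Fin d) (ZMod N → Fin d) ℂ :=
  Matrix.of fun f g => if ∀ t : ZMod N, f t = g (t - 1) then 1 else 0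

/-- The slice-local operator `B_t`. -/
noncomputable def sliceLocal (N d : ℕ) [NeZero N]
    (B : Matrix (Fin d) (Fin d) ℂ) (t : ZMod N) :
    Matrix (ZMod N → Fin d) (ZMod N → Fin d) ℂ :=
  sliceProd N d (fun t' => if t' = t then B else 1)

/-- `𝒱 := ⊗_t e^{iεtH}`. -/
noncomputable def Vop (N d : ℕ) [NeZero N] (H : Matrix (Fin d) (Fin d) ℂ) (ε : ℝ) :
    Matrix (ZMod N → Fin d) (ZMod N → Fin d) ℂ :=
  sliceProd N d (fun t => NormedSpace.exp ((Complex.I * (ε : ℂ) * (t.val : ℂ)) • H))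

/-- `G := ρ₀ e^{iS̃}` with `e^{iS̃} = 𝒱ᴴ 𝒮 𝒱`. -/
noncomputable def Gst (N d : ℕ) [NeZero N] (H : Matrix (Fin d) (Fin d) ℂ) (ε : ℝ)
    (ρ : Matrix (Fin d) (Fin d) ℂ) :
    Matrix (ZMod N → Fin d) (ZMod N → Fin d) ℂ :=
  sliceLocal N d ρ 0 * ((Vop N d H ε)ᴴ * timeShift N d * Vop N d H ε)

/-- The partial trace of a spacetime operator onto the slice `k`: the `d × d`
matrix whose `(i, j)` entry sums over all assignments of values to the slices
other than `k`, extended by `i` (resp. `j`) at slice `k`. -/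
noncomputable def sliceTrace (N d : ℕ) [NeZero N]
    (G : Matrix (ZMod N → Fin d) (ZMod N → Fin d) ℂ) (k : ZMod N) :
    Matrix (Fin d) (Fin d) ℂ :=
  Matrix.of fun i j =>
    ∑ h : {t : ZMod N // t ≠ k} → Fin d,
      G (fun t => if ht : t = k then i else h ⟨t, ht⟩)
        (fun t => if ht : t = k then j else h ⟨t, ht⟩)

/-! Since `H` is Hermitian, `𝒱ᴴ = ⊗_t e^{-iεtH}`, and the entries of `G` factor along the cycle of
slices: `G f g = ∏_t C_t (f t) (g (t - 1))` with `C_0 = ρ e^{iε(N-1)H}` and `C_t = e^{-iεH}` for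
`t ≠ 0`. Summing over the values on all slices but `k` contracts this cyclic chain into the
ordered product `C_k C_{k-1} ⋯ C_{k+1} = e^{-iεkH} ρ e^{iε(N-1)H} e^{-iε(N-1-k)H}
= e^{-iεkH} ρ e^{iεkH}`. The full trace is the trace of any partial trace; take `k = 0`. -/

section SliceProd

variable {N d : ℕ} [NeZero N]

lemma sliceProd_mul (A B : ZMod N → Matrix (Fin d) (Fin d) ℂ) :
    sliceProd N d A * sliceProd N d B = sliceProd N d (fun t => A t * B t) := by
  ext f g
  simp only [sliceProd, mul_apply, of_apply, ← Finset.prod_mul_distrib]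
  rw [← Fintype.prod_sum (fun t x => A t (f t) x * B t x (g t))]

lemma sliceProd_conjTranspose (A : ZMod N → Matrix (Fin d) (Fin d) ℂ) :
    (sliceProd N d A)ᴴ = sliceProd N d (fun t => (A t)ᴴ) := by
  ext f g
  simp [sliceProd, conjTranspose_apply, star_prod]

lemma timeShift_mul_apply (M : Matrix (ZMod N → Fin d) (ZMod N → Fin d) ℂ)
    (f g : ZMod N → Fin d) :
    (timeShift N d * M) f g = M (fun t => f (t + 1)) g := by
  rw [mul_apply, Finset.sum_eq_single (fun t => f (t + 1))]
  · simp [timeShift]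
  · intro h _ hh
    have : ¬ ∀ t, f t = h (t - 1) := fun hf => hh (funext fun t => by simp [hf (t + 1)])
    simp [timeShift, this]
  · simp

lemma sliceProd_mul_timeShift_mul_sliceProd_apply (A B : ZMod N → Matrix (Fin d) (Fin d) ℂ)
    (f g : ZMod N → Fin d) :
    (sliceProd N d A * timeShift N d * sliceProd N d B) f g
      = ∏ t, (A t * B (t - 1)) (f t) (g (t - 1)) := by
  have hB : ∀ h : ZMod N → Fin d,
      ∏ t, B t (h (t + 1)) (g t) = ∏ t, B (t - 1) (h t) (g (t - 1)) := fun h =>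
    ((Equiv.subRight 1).prod_comp fun t => B t (h (t + 1)) (g t)).symm.trans (by simp)
  simp only [mul_assoc, mul_apply (M := sliceProd N d A), timeShift_mul_apply]
  simp only [sliceProd, of_apply, hB, ← Finset.prod_mul_distrib]
  rw [← Fintype.prod_sum (fun t x => A t (f t) x * B (t - 1) x (g (t - 1)))]
  simp only [mul_apply]

lemma trace_eq_trace_sliceTrace (M : Matrix (ZMod N → Fin d) (ZMod N → Fin d) ℂ)
    (k : ZMod N) : M.trace = (sliceTrace N d M k).trace := by
  have hsplit : ∀ p, (Equiv.funSplitAt k (Fin d)).symm p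
      = fun t => if ht : t = k then p.1 else p.2 ⟨t, ht⟩ :=
    fun p => funext (Equiv.funSplitAt_symm_apply k _ p)
  rw [trace, ← (Equiv.funSplitAt k (Fin d)).symm.sum_comp, Fintype.sum_prod_type]
  simp only [hsplit]
  rfl

end SliceProd

section Chain

variable {R α : Type*} [CommSemiring R] [Fintype α] [DecidableEq α]

theorem Matrix.list_prod_ofFn_apply (n : ℕ) (D : Fin (n + 1) → Matrix α α R) (i j : α) :
    (List.ofFn D).prod i j
      = ∑ x : Fin n → α, ∏ m, D m (Fin.cons (α := fun _ => α) i x m)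
          (Fin.snoc (α := fun _ => α) x j m) := by
  induction n generalizing i with
  | zero => simp [Fin.snoc]
  | succ n ih =>
    rw [List.ofFn_succ, List.prod_cons, mul_apply,
      ← (Fin.consEquiv fun _ => α).sum_comp, Fintype.sum_prod_type]
    refine Finset.sum_congr rfl fun a _ => ?_
    rw [ih, Finset.mul_sum]
    refine Finset.sum_congr rfl fun x _ => ?_
    change _ = ∏ m, D m (Fin.cons (α := fun _ => α) i (Fin.cons a x) m)
      (Fin.snoc (α := fun _ => α) (Fin.cons a x) j m)
    rw [← Fin.cons_snoc_eq_snoc_cons]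
    conv_rhs => rw [Fin.prod_univ_succ]
    simp

theorem Matrix.sum_prod_cyclic_eq_list_prod {n : ℕ} (C : ZMod (n + 1) → Matrix α α R)
    (k : ZMod (n + 1)) (i j : α) :
    ∑ h : {t // t ≠ k} → α, ∏ t, C t (if ht : t = k then i else h ⟨t, ht⟩)
        (if ht : t - 1 = k then j else h ⟨t - 1, ht⟩)
      = (List.ofFn fun m => C (k - ZMod.finEquiv (n + 1) m)).prod i j := by
  -- `τ` walks the cycle backwards from `k`, turning it into a path `Fin (n + 1)` from `k` to `k`.
  set τ : Fin (n + 1) ≃ ZMod (n + 1) := (ZMod.finEquiv (n + 1)).toEquiv.trans (Equiv.subLeft k)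
  have hτ : ∀ m, τ m = k - ZMod.finEquiv (n + 1) m := fun _ => rfl
  have hτ_zero : τ 0 = k := by simp [hτ]
  have hτ_castSucc : ∀ r : Fin n, τ r.castSucc - 1 = τ r.succ := fun r => by
    rw [hτ, hτ, sub_sub, ← map_one (ZMod.finEquiv (n + 1)), ← map_add, Fin.coeSucc_eq_succ]
  have hτ_last : τ (Fin.last n) - 1 = k := by
    rw [hτ, sub_sub, ← map_one (ZMod.finEquiv (n + 1)), ← map_add, Fin.last_add_one, map_zero,
      sub_zero]
  let ψ : Fin n ≃ {t // t ≠ k} :=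
    (finSuccAboveEquiv 0).trans (τ.subtypeEquiv fun m => by rw [← hτ_zero, τ.injective.ne_iff])
  have hψ : ∀ r, (ψ r : ZMod (n + 1)) = τ r.succ := fun r => by
    simp [ψ, finSuccAboveEquiv_apply]
  rw [list_prod_ofFn_apply]
  refine Fintype.sum_equiv (ψ.symm.arrowCongr (Equiv.refl α)) _ _ fun h => ?_
  rw [← τ.prod_comp]
  refine Finset.prod_congr rfl fun m _ => congrArg₂ (C (τ m)) ?_ ?_
  · cases m using Fin.cases with
    | zero => simp [hτ_zero]
    | succ r =>
      have hr : τ r.succ ≠ k := hψ r ▸ (ψ r).2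
      rw [dif_neg hr, Fin.cons_succ]
      simp only [Equiv.arrowCongr_apply, Equiv.symm_symm, Equiv.coe_refl, Function.comp_apply, id]
      exact congrArg h (Subtype.ext (hψ r).symm)
  · cases m using Fin.lastCases with
    | last => simp [hτ_last]
    | cast r =>
      have hr : τ r.castSucc - 1 ≠ k := hτ_castSucc r ▸ hψ r ▸ (ψ r).2
      rw [dif_neg hr, Fin.snoc_castSucc]
      simp only [Equiv.arrowCongr_apply, Equiv.symm_symm, Equiv.coe_refl, Function.comp_apply, id]
      exact congrArg h (Subtype.ext ((hτ_castSucc r).trans (hψ r).symm))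

end Chain

theorem List.prod_ofFn_ite_eq_pow_mul_pow {M : Type*} [Monoid M] (P E : M) {n k : ℕ}
    (hk : k ≤ n) :
    (List.ofFn fun m : Fin (n + 1) => if (m : ℕ) = k then P else E).prod
      = E ^ k * P * E ^ (n - k) := by
  induction k generalizing n with
  | zero => simp [List.ofFn_succ, List.ofFn_const]
  | succ k ih =>
    obtain ⟨n, rfl⟩ : ∃ n', n = n' + 1 := ⟨n - 1, by omega⟩
    rw [List.ofFn_succ, List.prod_cons]
    simp only [Fin.val_zero, Fin.val_succ, Nat.add_right_cancel_iff, ih (by omega : k ≤ n)]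
    simp [pow_succ', mul_assoc]

section Exp

variable {ι : Type*} [Fintype ι] [DecidableEq ι]

theorem Matrix.exp_add_smul (H : Matrix ι ι ℂ) (a b : ℂ) :
    NormedSpace.exp ((a + b) • H) = NormedSpace.exp (a • H) * NormedSpace.exp (b • H) := by
  rw [add_smul]
  exact exp_add_of_commute _ _ (((Commute.refl H).smul_left a).smul_right b)

theorem Matrix.exp_smul_pow (H : Matrix ι ι ℂ) (a : ℂ) (m : ℕ) :
    NormedSpace.exp (a • H) ^ m = NormedSpace.exp ((m * a) • H) := by
  rw [← exp_nsmul, ← Nat.cast_smul_eq_nsmul ℂ, smul_smul]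

theorem Matrix.IsHermitian.conjTranspose_exp_smul {H : Matrix ι ι ℂ} (hH : H.IsHermitian)
    (a : ℂ) : (NormedSpace.exp (a • H))ᴴ = NormedSpace.exp (star a • H) := by
  rw [← exp_conjTranspose, conjTranspose_smul, hH.eq]

end Exp

section Spacetime

variable {d : ℕ} {H : Matrix (Fin d) (Fin d) ℂ} {ε : ℝ}

lemma Vop_conjTranspose {N : ℕ} [NeZero N] (hH : H.IsHermitian) :
    (Vop N d H ε)ᴴ = sliceProd N d fun t => NormedSpace.exp ((-(I * ε * t.val)) • H) := by
  rw [Vop, sliceProd_conjTranspose]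
  congr! 2 with t
  rw [hH.conjTranspose_exp_smul]
  congr 2
  simp only [star_mul', star_def, conj_I, conj_ofReal, conj_natCast]
  ring

lemma ite_mul_exp_mul_exp_val_sub_one {n : ℕ} (ρ : Matrix (Fin d) (Fin d) ℂ)
    (t : ZMod (n + 1)) :
    (if t = 0 then ρ else 1) * NormedSpace.exp ((-(I * ε * t.val)) • H)
        * NormedSpace.exp ((I * ε * (t - 1).val) • H)
      = if t = 0 then ρ * NormedSpace.exp ((I * ε * n) • H)
        else NormedSpace.exp ((-(I * ε)) • H) := by
  split_ifs with ht
  · simp [ht, ZMod.val_neg_one]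
  · have hval : (t - 1).val = t.val - 1 := Fin.val_sub_one_of_ne_zero ht
    have hpos : 1 ≤ t.val := Nat.one_le_iff_ne_zero.mpr ((ZMod.val_ne_zero t).mpr ht)
    rw [one_mul, ← exp_add_smul, hval, Nat.cast_sub hpos]
    congr 2
    push_cast
    ring

lemma Gst_apply (hH : H.IsHermitian) {n : ℕ} (ρ : Matrix (Fin d) (Fin d) ℂ)
    (f g : ZMod (n + 1) → Fin d) :
    Gst (n + 1) d H ε ρ f g = ∏ t, (if t = 0 then ρ * NormedSpace.exp ((I * ε * n) • H)
      else NormedSpace.exp ((-(I * ε)) • H)) (f t) (g (t - 1)) := by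
  rw [Gst, sliceLocal, Vop_conjTranspose hH, ← mul_assoc, ← mul_assoc, sliceProd_mul, Vop,
    sliceProd_mul_timeShift_mul_sliceProd_apply]
  simp only [ite_mul_exp_mul_exp_val_sub_one]

lemma sliceTrace_Gst (hH : H.IsHermitian) {N : ℕ} [NeZero N] (ρ : Matrix (Fin d) (Fin d) ℂ)
    {k : ℕ} (hk : k ≤ N - 1) :
    sliceTrace N d (Gst N d H ε ρ) k
      = NormedSpace.exp ((-(I * ε * k)) • H) * ρ * NormedSpace.exp ((I * ε * k) • H) := by
  obtain ⟨n, rfl⟩ := Nat.exists_eq_succ_of_ne_zero (NeZero.ne N)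
  have hkn : k ≤ n := by omega
  have hzero : ∀ m : Fin (n + 1),
      (k : ZMod (n + 1)) - ZMod.finEquiv (n + 1) m = 0 ↔ (m : ℕ) = k := fun m => by
    rw [sub_eq_zero, ← (ZMod.val_injective (n + 1)).eq_iff, ZMod.val_cast_of_lt (by omega),
      eq_comm]
    rfl
  ext i j
  simp only [sliceTrace, of_apply, Gst_apply hH]
  rw [sum_prod_cyclic_eq_list_prod]
  simp only [hzero]
  rw [List.prod_ofFn_ite_eq_pow_mul_pow _ _ hkn, exp_smul_pow, exp_smul_pow, mul_assoc,
    mul_assoc, ← exp_add_smul, Nat.cast_sub hkn,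
    show (k : ℂ) * -(I * ε) = -(I * ε * k) by ring,
    show I * ε * n + (n - k) * -(I * ε) = I * ε * k by ring, ← mul_assoc]

end Spacetime

theorem sliceTrace_spacetime_state_general (N d : ℕ) [NeZero N]
    (H : Matrix (Fin d) (Fin d) ℂ) (hH : H.IsHermitian) (ε : ℝ)
    (ρ : Matrix (Fin d) (Fin d) ℂ) (k : ℕ) (hk : k ≤ N - 1) :
    sliceTrace N d (Gst N d H ε ρ) (k : ZMod N) =
        NormedSpace.exp ((-(Complex.I * (ε : ℂ) * (k : ℂ))) • H) * ρ *
          NormedSpace.exp ((Complex.I * (ε : ℂ) * (k : ℂ)) • H) ∧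
      Matrix.trace (Gst N d H ε ρ) = Matrix.trace ρ := by
  refine ⟨sliceTrace_Gst hH ρ hk, ?_⟩
  rw [trace_eq_trace_sliceTrace _ ((0 : ℕ) : ZMod N), sliceTrace_Gst hH ρ (Nat.zero_le _)]
  simp

/-- Tracing the generalized spacetime state `G = ρ₀ e^{iS̃}` over all time slices
except slice `k` recovers the ordinary Schrödinger-evolved state
`e^{−iεkH} ρ e^{iεkH}` at time `εk`; in particular `Tr G = tr ρ`. -/
theorem sliceTrace_spacetime_state (N d : ℕ) [NeZero N] (hd : 1 ≤ d)
    (H : Matrix (Fin d) (Fin d) ℂ) (hH : H.IsHermitian) (ε : ℝ)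
    (ρ : Matrix (Fin d) (Fin d) ℂ) (k : ℕ) (hk : k ≤ N - 1) :
    sliceTrace N d (Gst N d H ε ρ) (k : ZMod N) =
        NormedSpace.exp ((-(Complex.I * (ε : ℂ) * (k : ℂ))) • H) * ρ *
          NormedSpace.exp ((Complex.I * (ε : ℂ) * (k : ℂ)) • H) ∧
      Matrix.trace (Gst N d H ε ρ) = Matrix.trace ρ :=
  sliceTrace_spacetime_state_general N d H hH ε ρ k hk
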